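/- arXiv:1807.05606 — 9 statements merged into one kernel-verified Lean document; each statement's English description precedes it below -/
import Mathlib

section
/- Let M be a 4×4 real symmetric positive semidefinite matrix with all diagonal entries equal to 1, and let V ∈ ℝ⁴ with entries c₁, c₂, c₃, c₄ be such that M − V Vᵀ is positive semidefinite. Writing σᵢ = √(1 − cᵢ²), the following three inequalities hold: |c₁c₂ − c₃c₄ − M₁₂ + M₃₄| ≤ σ₁σ₂ + σ₃σ₄, |c₁c₃ − c₂c₄ − M₁₃ + M₂₄| ≤ σ₁σ₃ + σ₂σ₄, and |c₂c₃ − c₁c₄ − M₂₃ + M₁₄| ≤ σ₂σ₃ + σ₁σ₄. -/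
/-!
Every 2×2 principal minor of the covariance matrix `C = M - V Vᵀ` is nonnegative, so
`|M i j - cᵢ cⱼ| = |C i j| ≤ √(C i i · C j j) = σᵢ σⱼ`. Each of the three expressions is a
difference of two such entries of `C`, and the triangle inequality finishes.
-/

open Matrix

theorem Matrix.PosSemidef.sq_apply_le_mul_apply {n : Type*} {A : Matrix n n ℝ}
    (hA : A.PosSemidef) (i j : n) : A i j ^ 2 ≤ A i i * A j j := by
  have hdet := (hA.submatrix ![i, j]).det_nonneg
  rw [det_fin_two] at hdet
  have hsymm : A j i = A i j := hA.1.apply i j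
  simp only [submatrix_apply, cons_val_zero, cons_val_one, hsymm] at hdet
  linarith [sq (A i j)]

theorem Matrix.PosSemidef.abs_apply_le_sqrt_mul_sqrt {n : Type*} {A : Matrix n n ℝ}
    (hA : A.PosSemidef) (i j : n) : |A i j| ≤ √(A i i) * √(A j j) := by
  rw [← Real.sqrt_mul hA.diag_nonneg]
  exact Real.abs_le_sqrt (hA.sq_apply_le_mul_apply i j)

theorem abs_apply_sub_mul_le_of_posSemidef_sub_vecMulVec {n : Type*} {M : Matrix n n ℝ}
    (hdiag : ∀ i, M i i = 1) {V : n → ℝ} (hC : (M - vecMulVec V V).PosSemidef) (i j : n) :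
    |M i j - V i * V j| ≤ √(1 - V i ^ 2) * √(1 - V j ^ 2) := by
  simpa [vecMulVec_apply, hdiag, sq] using hC.abs_apply_le_sqrt_mul_sqrt i j

theorem abs_mul_sub_mul_sub_apply_add_apply_le {n : Type*} {M : Matrix n n ℝ}
    (hdiag : ∀ i, M i i = 1) {V : n → ℝ} (hC : (M - vecMulVec V V).PosSemidef) (i j k l : n) :
    |V i * V j - V k * V l - M i j + M k l| ≤
      √(1 - V i ^ 2) * √(1 - V j ^ 2) + √(1 - V k ^ 2) * √(1 - V l ^ 2) :=
  calc |V i * V j - V k * V l - M i j + M k l|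
      = |(M k l - V k * V l) - (M i j - V i * V j)| := by ring_nf
    _ ≤ |M i j - V i * V j| + |M k l - V k * V l| := (abs_sub _ _).trans_eq (add_comm _ _)
    _ ≤ _ := add_le_add (abs_apply_sub_mul_le_of_posSemidef_sub_vecMulVec hdiag hC i j)
        (abs_apply_sub_mul_le_of_posSemidef_sub_vecMulVec hdiag hC k l)

theorem covariance_certificate_bounds_general
    (M : Matrix (Fin 4) (Fin 4) ℝ)
    (hdiag : ∀ i, M i i = 1)
    (V : Fin 4 → ℝ)
    (hC : (M - Matrix.vecMulVec V V).PosSemidef) :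
    |V 0 * V 1 - V 2 * V 3 - M 0 1 + M 2 3| ≤
      Real.sqrt (1 - (V 0) ^ 2) * Real.sqrt (1 - (V 1) ^ 2) +
      Real.sqrt (1 - (V 2) ^ 2) * Real.sqrt (1 - (V 3) ^ 2) ∧
    |V 0 * V 2 - V 1 * V 3 - M 0 2 + M 1 3| ≤
      Real.sqrt (1 - (V 0) ^ 2) * Real.sqrt (1 - (V 2) ^ 2) +
      Real.sqrt (1 - (V 1) ^ 2) * Real.sqrt (1 - (V 3) ^ 2) ∧
    |V 1 * V 2 - V 0 * V 3 - M 1 2 + M 0 3| ≤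
      Real.sqrt (1 - (V 1) ^ 2) * Real.sqrt (1 - (V 2) ^ 2) +
      Real.sqrt (1 - (V 0) ^ 2) * Real.sqrt (1 - (V 3) ^ 2) :=
  ⟨abs_mul_sub_mul_sub_apply_add_apply_le hdiag hC 0 1 2 3,
    abs_mul_sub_mul_sub_apply_add_apply_le hdiag hC 0 2 1 3,
    abs_mul_sub_mul_sub_apply_add_apply_le hdiag hC 1 2 0 3⟩

/-- For a 4×4 real symmetric PSD matrix `M` with unit diagonal and a
correlator vector `V` (entries `c i = V i`) such that `M - V Vᵀ` is PSD, the three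
quantum-like bounds on two-point correlators hold, where `σ i = √(1 - (c i)²)`. -/
theorem covariance_certificate_bounds
    (M : Matrix (Fin 4) (Fin 4) ℝ) (hM : M.PosSemidef)
    (hdiag : ∀ i, M i i = 1)
    (V : Fin 4 → ℝ)
    (hC : (M - Matrix.vecMulVec V V).PosSemidef) :
    |V 0 * V 1 - V 2 * V 3 - M 0 1 + M 2 3| ≤
      Real.sqrt (1 - (V 0) ^ 2) * Real.sqrt (1 - (V 1) ^ 2) +
      Real.sqrt (1 - (V 2) ^ 2) * Real.sqrt (1 - (V 3) ^ 2) ∧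
    |V 0 * V 2 - V 1 * V 3 - M 0 2 + M 1 3| ≤
      Real.sqrt (1 - (V 0) ^ 2) * Real.sqrt (1 - (V 2) ^ 2) +
      Real.sqrt (1 - (V 1) ^ 2) * Real.sqrt (1 - (V 3) ^ 2) ∧
    |V 1 * V 2 - V 0 * V 3 - M 1 2 + M 0 3| ≤
      Real.sqrt (1 - (V 1) ^ 2) * Real.sqrt (1 - (V 2) ^ 2) +
      Real.sqrt (1 - (V 0) ^ 2) * Real.sqrt (1 - (V 3) ^ 2) :=
  covariance_certificate_bounds_general M hdiag V hC
end

section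
/- Let c₁, c₂, c₃, c₄ be real numbers in the interval [−1, 1] and set σᵢ = √(1 − cᵢ²). Then the following three inequalities are pairwise equivalent: |c₁c₂ − c₃c₄| ≤ σ₁σ₂ + σ₃σ₄, |c₁c₃ − c₂c₄| ≤ σ₁σ₃ + σ₂σ₄, and |c₂c₃ − c₁c₄| ≤ σ₂σ₃ + σ₁σ₄. -/
lemma tlm_abs_sq (x R : ℝ) (hR : 0 ≤ R) : |x| ≤ R ↔ x ^ 2 ≤ R ^ 2 := by
  constructor
  · intro h
    have := pow_le_pow_left₀ (abs_nonneg x) h 2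
    simpa [sq_abs] using this
  · intro h
    rw [← Real.sqrt_sq_eq_abs, ← Real.sqrt_sq hR]
    exact Real.sqrt_le_sqrt h

lemma tlm_sym (a b c d : ℝ)
    (ha : a ∈ Set.Icc (-1 : ℝ) 1) (hb : b ∈ Set.Icc (-1 : ℝ) 1)
    (hc : c ∈ Set.Icc (-1 : ℝ) 1) (hd : d ∈ Set.Icc (-1 : ℝ) 1) :
    (|a * b - c * d| ≤
        Real.sqrt (1 - a ^ 2) * Real.sqrt (1 - b ^ 2) +
        Real.sqrt (1 - c ^ 2) * Real.sqrt (1 - d ^ 2)) ↔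
    a ^ 2 + b ^ 2 + c ^ 2 + d ^ 2 - 2 * (a * b * c * d) - 2 ≤
      2 * (Real.sqrt (1 - a ^ 2) * Real.sqrt (1 - b ^ 2) *
        Real.sqrt (1 - c ^ 2) * Real.sqrt (1 - d ^ 2)) := by
  have hsa : Real.sqrt (1 - a ^ 2) ^ 2 = 1 - a ^ 2 :=
    Real.sq_sqrt (by nlinarith [ha.1, ha.2])
  have hsb : Real.sqrt (1 - b ^ 2) ^ 2 = 1 - b ^ 2 :=
    Real.sq_sqrt (by nlinarith [hb.1, hb.2])
  have hsc : Real.sqrt (1 - c ^ 2) ^ 2 = 1 - c ^ 2 :=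
    Real.sq_sqrt (by nlinarith [hc.1, hc.2])
  have hsd : Real.sqrt (1 - d ^ 2) ^ 2 = 1 - d ^ 2 :=
    Real.sq_sqrt (by nlinarith [hd.1, hd.2])
  have hR : 0 ≤ Real.sqrt (1 - a ^ 2) * Real.sqrt (1 - b ^ 2) +
      Real.sqrt (1 - c ^ 2) * Real.sqrt (1 - d ^ 2) := by
    positivity
  rw [tlm_abs_sq _ _ hR]
  constructor <;> intro h <;> nlinarith [hsa, hsb, hsc, hsd, h]

/-- For `c₁, c₂, c₃, c₄ ∈ [-1, 1]` with `σᵢ = √(1 - cᵢ²)`, the three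
Tsirelson–Landau–Masanes inequalities are pairwise equivalent. -/
theorem tlm_inequalities_equivalent
    (c₁ c₂ c₃ c₄ : ℝ)
    (h₁ : c₁ ∈ Set.Icc (-1 : ℝ) 1) (h₂ : c₂ ∈ Set.Icc (-1 : ℝ) 1)
    (h₃ : c₃ ∈ Set.Icc (-1 : ℝ) 1) (h₄ : c₄ ∈ Set.Icc (-1 : ℝ) 1) :
    (|c₁ * c₂ - c₃ * c₄| ≤
        Real.sqrt (1 - c₁ ^ 2) * Real.sqrt (1 - c₂ ^ 2) +
        Real.sqrt (1 - c₃ ^ 2) * Real.sqrt (1 - c₄ ^ 2) ↔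
      |c₁ * c₃ - c₂ * c₄| ≤
        Real.sqrt (1 - c₁ ^ 2) * Real.sqrt (1 - c₃ ^ 2) +
        Real.sqrt (1 - c₂ ^ 2) * Real.sqrt (1 - c₄ ^ 2)) ∧
    (|c₁ * c₃ - c₂ * c₄| ≤
        Real.sqrt (1 - c₁ ^ 2) * Real.sqrt (1 - c₃ ^ 2) +
        Real.sqrt (1 - c₂ ^ 2) * Real.sqrt (1 - c₄ ^ 2) ↔
      |c₂ * c₃ - c₁ * c₄| ≤
        Real.sqrt (1 - c₂ ^ 2) * Real.sqrt (1 - c₃ ^ 2) +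
        Real.sqrt (1 - c₁ ^ 2) * Real.sqrt (1 - c₄ ^ 2)) := by
  have e12 := tlm_sym c₁ c₂ c₃ c₄ h₁ h₂ h₃ h₄
  have e13 := tlm_sym c₁ c₃ c₂ c₄ h₁ h₃ h₂ h₄
  have e23 := tlm_sym c₂ c₃ c₁ c₄ h₂ h₃ h₁ h₄
  constructor
  · rw [e12, e13]; constructor <;> intro h <;> nlinarith [h]
  · rw [e13, e23]; constructor <;> intro h <;> nlinarith [h]
end

section
/- Let c₁, c₂, c₃, c₄ be real numbers in the interval [−1, 1] and set σᵢ = √(1 − cᵢ²). Then the inequality |c₁c₂ − c₃c₄| ≤ σ₁σ₂ + σ₃σ₄ holds if and only if 2σ₁σ₂σ₃σ₄ + 2c₁c₂c₃c₄ + 2 − (c₁² + c₂² + c₃² + c₄²) ≥ 0. -/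
/-- For `c₁, c₂, c₃, c₄ ∈ [-1, 1]` with `σᵢ = √(1 - cᵢ²)`, the first
TLM inequality holds iff the symmetric squared form
`2σ₁σ₂σ₃σ₄ + 2c₁c₂c₃c₄ + 2 - (c₁² + c₂² + c₃² + c₄²) ≥ 0` does. -/
theorem tlm_iff_symmetric_form
    (c₁ c₂ c₃ c₄ : ℝ)
    (h₁ : c₁ ∈ Set.Icc (-1 : ℝ) 1) (h₂ : c₂ ∈ Set.Icc (-1 : ℝ) 1)
    (h₃ : c₃ ∈ Set.Icc (-1 : ℝ) 1) (h₄ : c₄ ∈ Set.Icc (-1 : ℝ) 1) :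
    |c₁ * c₂ - c₃ * c₄| ≤
        Real.sqrt (1 - c₁ ^ 2) * Real.sqrt (1 - c₂ ^ 2) +
        Real.sqrt (1 - c₃ ^ 2) * Real.sqrt (1 - c₄ ^ 2) ↔
      0 ≤ 2 * (Real.sqrt (1 - c₁ ^ 2) * Real.sqrt (1 - c₂ ^ 2) *
            Real.sqrt (1 - c₃ ^ 2) * Real.sqrt (1 - c₄ ^ 2)) +
          2 * (c₁ * c₂ * c₃ * c₄) + 2 - (c₁ ^ 2 + c₂ ^ 2 + c₃ ^ 2 + c₄ ^ 2) := by
  obtain ⟨ha₁, hb₁⟩ := h₁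
  obtain ⟨ha₂, hb₂⟩ := h₂
  obtain ⟨ha₃, hb₃⟩ := h₃
  obtain ⟨ha₄, hb₄⟩ := h₄
  set σ₁ := Real.sqrt (1 - c₁ ^ 2) with hσ₁
  set σ₂ := Real.sqrt (1 - c₂ ^ 2) with hσ₂
  set σ₃ := Real.sqrt (1 - c₃ ^ 2) with hσ₃
  set σ₄ := Real.sqrt (1 - c₄ ^ 2) with hσ₄
  have hs₁ : σ₁ ^ 2 = 1 - c₁ ^ 2 := Real.sq_sqrt (by nlinarith)
  have hs₂ : σ₂ ^ 2 = 1 - c₂ ^ 2 := Real.sq_sqrt (by nlinarith)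
  have hs₃ : σ₃ ^ 2 = 1 - c₃ ^ 2 := Real.sq_sqrt (by nlinarith)
  have hs₄ : σ₄ ^ 2 = 1 - c₄ ^ 2 := Real.sq_sqrt (by nlinarith)
  have hn₁ : 0 ≤ σ₁ := Real.sqrt_nonneg _
  have hn₂ : 0 ≤ σ₂ := Real.sqrt_nonneg _
  have hn₃ : 0 ≤ σ₃ := Real.sqrt_nonneg _
  have hn₄ : 0 ≤ σ₄ := Real.sqrt_nonneg _
  have hkey : (σ₁ * σ₂ + σ₃ * σ₄) ^ 2 - (c₁ * c₂ - c₃ * c₄) ^ 2 =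
      2 * (σ₁ * σ₂ * σ₃ * σ₄) + 2 * (c₁ * c₂ * c₃ * c₄) + 2 -
        (c₁ ^ 2 + c₂ ^ 2 + c₃ ^ 2 + c₄ ^ 2) := by
    linear_combination σ₂ ^ 2 * hs₁ + (1 - c₁ ^ 2) * hs₂ + σ₄ ^ 2 * hs₃ +
      (1 - c₃ ^ 2) * hs₄
  have hS : 0 ≤ σ₁ * σ₂ + σ₃ * σ₄ := by positivity
  rw [← hkey]
  constructor
  · intro h
    have hd : (c₁ * c₂ - c₃ * c₄) ^ 2 ≤ (σ₁ * σ₂ + σ₃ * σ₄) ^ 2 := by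
      rw [← sq_abs (c₁ * c₂ - c₃ * c₄)]
      exact pow_le_pow_left₀ (abs_nonneg _) h 2
    linarith
  · intro h
    exact abs_le_of_sq_le_sq (by linarith) hS
end

section
/- Let H be a complex Hilbert space, ψ ∈ H a unit vector, and A₀, A₁, B₀, B₁ : H →L[ℂ] H bounded self-adjoint operators satisfying Aᵢ ∘ Aᵢ = 1 and Bⱼ ∘ Bⱼ = 1, with Aᵢ ∘ Bⱼ = Bⱼ ∘ Aᵢ for all i, j ∈ {0,1}. Define the correlators c₁ = re⟪ψ, A₀B₀ψ⟫, c₂ = re⟪ψ, A₁B₀ψ⟫, c₃ = re⟪ψ, A₀B₁ψ⟫, c₄ = re⟪ψ, A₁B₁ψ⟫, and σᵢ = √(1 − cᵢ²). Then |c₁c₂ − c₃c₄| ≤ σ₁σ₂ + σ₃σ₄, |c₁c₃ − c₂c₄| ≤ σ₁σ₃ + σ₂σ₄, and |c₂c₃ − c₁c₄| ≤ σ₂σ₃ + σ₁σ₄. -/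
/-!
Moving `Aᵢ` across the inner product turns each correlator into the real inner product
`⟪Aᵢψ, Bⱼψ⟫` of two unit vectors. For unit vectors `a, b, p`, applying Cauchy–Schwarz to the
components of `a` and `b` orthogonal to `p` gives
`|⟪a, b⟫ - ⟪a, p⟫⟪b, p⟫| ≤ √(1 - ⟪a, p⟫²) √(1 - ⟪b, p⟫²)`. Two such bounds, with `p = B₀ψ` and
`p = B₁ψ`, combined by the triangle inequality through `⟪A₀ψ, A₁ψ⟫`, give the first inequality;
exchanging the roles of Alice and Bob gives the second. Squared, each of the three inequalities
says that the same symmetric expression `2 - ∑ cᵢ² + 2 (∏ cᵢ + ∏ σᵢ)` is nonnegative, so the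
third follows from the first.
-/

open scoped RealInnerProductSpace

section Correlators

variable {c₁ c₂ c₃ c₄ : ℝ}

theorem abs_mul_sub_mul_le_iff (h₁ : c₁ ^ 2 ≤ 1) (h₂ : c₂ ^ 2 ≤ 1) (h₃ : c₃ ^ 2 ≤ 1)
    (h₄ : c₄ ^ 2 ≤ 1) :
    |c₁ * c₂ - c₃ * c₄| ≤
        √(1 - c₁ ^ 2) * √(1 - c₂ ^ 2) + √(1 - c₃ ^ 2) * √(1 - c₄ ^ 2) ↔
      0 ≤ 2 - (c₁ ^ 2 + c₂ ^ 2 + c₃ ^ 2 + c₄ ^ 2) +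
        2 * (c₁ * c₂ * c₃ * c₄ +
          √(1 - c₁ ^ 2) * √(1 - c₂ ^ 2) * √(1 - c₃ ^ 2) * √(1 - c₄ ^ 2)) := by
  have e₁ := Real.sq_sqrt (sub_nonneg.2 h₁)
  have e₂ := Real.sq_sqrt (sub_nonneg.2 h₂)
  have e₃ := Real.sq_sqrt (sub_nonneg.2 h₃)
  have e₄ := Real.sq_sqrt (sub_nonneg.2 h₄)
  have hgap : (√(1 - c₁ ^ 2) * √(1 - c₂ ^ 2) + √(1 - c₃ ^ 2) * √(1 - c₄ ^ 2)) ^ 2 -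
      (c₁ * c₂ - c₃ * c₄) ^ 2 = 2 - (c₁ ^ 2 + c₂ ^ 2 + c₃ ^ 2 + c₄ ^ 2) +
        2 * (c₁ * c₂ * c₃ * c₄ +
          √(1 - c₁ ^ 2) * √(1 - c₂ ^ 2) * √(1 - c₃ ^ 2) * √(1 - c₄ ^ 2)) := by
    linear_combination √(1 - c₂ ^ 2) ^ 2 * e₁ + (1 - c₁ ^ 2) * e₂ + √(1 - c₄ ^ 2) ^ 2 * e₃ +
      (1 - c₃ ^ 2) * e₄
  rw [← sq_le_sq₀ (abs_nonneg _) (by positivity), sq_abs, ← sub_nonneg, hgap]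

theorem abs_mul_sub_mul_le_swap (h₁ : c₁ ^ 2 ≤ 1) (h₂ : c₂ ^ 2 ≤ 1) (h₃ : c₃ ^ 2 ≤ 1)
    (h₄ : c₄ ^ 2 ≤ 1)
    (h : |c₁ * c₂ - c₃ * c₄| ≤
      √(1 - c₁ ^ 2) * √(1 - c₂ ^ 2) + √(1 - c₃ ^ 2) * √(1 - c₄ ^ 2)) :
    |c₂ * c₃ - c₁ * c₄| ≤
      √(1 - c₂ ^ 2) * √(1 - c₃ ^ 2) + √(1 - c₁ ^ 2) * √(1 - c₄ ^ 2) := by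
  rw [abs_mul_sub_mul_le_iff h₁ h₂ h₃ h₄] at h
  rw [abs_mul_sub_mul_le_iff h₂ h₃ h₁ h₄]
  linarith

end Correlators

section RealInnerProductSpace

variable {F : Type*} [NormedAddCommGroup F] [InnerProductSpace ℝ F]

theorem real_inner_sq_le_one {u v : F} (hu : ‖u‖ = 1) (hv : ‖v‖ = 1) : ⟪u, v⟫ ^ 2 ≤ 1 :=
  (sq_le_one_iff_abs_le_one _).2 (by simpa [hu, hv] using abs_real_inner_le_norm u v)

theorem abs_real_inner_sub_inner_mul_inner_le {p : F} (hp : ‖p‖ = 1) (a b : F) :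
    |⟪a, b⟫ - ⟪a, p⟫ * ⟪b, p⟫| ≤ √(‖a‖ ^ 2 - ⟪a, p⟫ ^ 2) * √(‖b‖ ^ 2 - ⟪b, p⟫ ^ 2) := by
  have hproj : ∀ x y : F, ⟪x - ⟪x, p⟫ • p, y - ⟪y, p⟫ • p⟫ = ⟪x, y⟫ - ⟪x, p⟫ * ⟪y, p⟫ := by
    intro x y
    simp only [inner_sub_left, inner_sub_right, real_inner_smul_left, real_inner_smul_right,
      real_inner_self_eq_norm_sq, hp, real_inner_comm p]
    ring
  have hnorm : ∀ x : F, √(‖x‖ ^ 2 - ⟪x, p⟫ ^ 2) = ‖x - ⟪x, p⟫ • p‖ := by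
    intro x
    rw [sq ⟪x, p⟫, ← real_inner_self_eq_norm_sq, ← hproj, real_inner_self_eq_norm_sq,
      Real.sqrt_sq (norm_nonneg _)]
  rw [hnorm, hnorm, ← hproj]
  exact abs_real_inner_le_norm _ _

theorem abs_real_inner_mul_sub_mul_le {u₀ u₁ v₀ v₁ : F} (hu₀ : ‖u₀‖ = 1) (hu₁ : ‖u₁‖ = 1)
    (hv₀ : ‖v₀‖ = 1) (hv₁ : ‖v₁‖ = 1) :
    |⟪u₀, v₀⟫ * ⟪u₁, v₀⟫ - ⟪u₀, v₁⟫ * ⟪u₁, v₁⟫| ≤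
      √(1 - ⟪u₀, v₀⟫ ^ 2) * √(1 - ⟪u₁, v₀⟫ ^ 2) +
        √(1 - ⟪u₀, v₁⟫ ^ 2) * √(1 - ⟪u₁, v₁⟫ ^ 2) := by
  have h₀ := abs_real_inner_sub_inner_mul_inner_le hv₀ u₀ u₁
  have h₁ := abs_real_inner_sub_inner_mul_inner_le hv₁ u₀ u₁
  rw [hu₀, hu₁, one_pow] at h₀ h₁
  calc _ = |(⟪u₀, u₁⟫ - ⟪u₀, v₁⟫ * ⟪u₁, v₁⟫) - (⟪u₀, u₁⟫ - ⟪u₀, v₀⟫ * ⟪u₁, v₀⟫)| := by ring_nf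
    _ ≤ _ := (abs_sub _ _).trans (by linarith)

end RealInnerProductSpace

theorem IsSelfAdjoint.mem_unitary_of_mul_self_eq_one {R : Type*} [Monoid R] [StarMul R] {a : R}
    (ha : IsSelfAdjoint a) (h : a * a = 1) : a ∈ unitary R :=
  Unitary.mem_iff.2 ⟨by rw [ha.star_eq, h], by rw [ha.star_eq, h]⟩

theorem IsSelfAdjoint.re_inner_mul_apply {𝕜 H : Type*} [RCLike 𝕜] [NormedAddCommGroup H]
    [InnerProductSpace 𝕜 H] [CompleteSpace H] {A : H →L[𝕜] H} (hA : IsSelfAdjoint A)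
    (B : H →L[𝕜] H) (ψ : H) :
    RCLike.re (inner 𝕜 ψ ((A * B) ψ)) = RCLike.re (inner 𝕜 (A ψ) (B ψ)) :=
  congrArg RCLike.re (hA.isSymmetric.apply_clm ψ (B ψ)).symm

theorem quantum_tlm_general
    {H : Type*} [NormedAddCommGroup H] [InnerProductSpace ℂ H] [CompleteSpace H]
    (ψ : H) (hψ : ‖ψ‖ = 1)
    (A₀ A₁ B₀ B₁ : H →L[ℂ] H)
    (hA₀ : IsSelfAdjoint A₀) (hA₁ : IsSelfAdjoint A₁)
    (hB₀ : IsSelfAdjoint B₀) (hB₁ : IsSelfAdjoint B₁)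
    (hA₀2 : A₀ * A₀ = 1) (hA₁2 : A₁ * A₁ = 1)
    (hB₀2 : B₀ * B₀ = 1) (hB₁2 : B₁ * B₁ = 1)
    (c₁ c₂ c₃ c₄ : ℝ)
    (hc₁ : c₁ = (inner ℂ ψ ((A₀ * B₀) ψ) : ℂ).re)
    (hc₂ : c₂ = (inner ℂ ψ ((A₁ * B₀) ψ) : ℂ).re)
    (hc₃ : c₃ = (inner ℂ ψ ((A₀ * B₁) ψ) : ℂ).re)
    (hc₄ : c₄ = (inner ℂ ψ ((A₁ * B₁) ψ) : ℂ).re) :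
    |c₁ * c₂ - c₃ * c₄| ≤
      Real.sqrt (1 - c₁ ^ 2) * Real.sqrt (1 - c₂ ^ 2) +
      Real.sqrt (1 - c₃ ^ 2) * Real.sqrt (1 - c₄ ^ 2) ∧
    |c₁ * c₃ - c₂ * c₄| ≤
      Real.sqrt (1 - c₁ ^ 2) * Real.sqrt (1 - c₃ ^ 2) +
      Real.sqrt (1 - c₂ ^ 2) * Real.sqrt (1 - c₄ ^ 2) ∧
    |c₂ * c₃ - c₁ * c₄| ≤
      Real.sqrt (1 - c₂ ^ 2) * Real.sqrt (1 - c₃ ^ 2) +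
      Real.sqrt (1 - c₁ ^ 2) * Real.sqrt (1 - c₄ ^ 2) := by
  -- `⟪x, y⟫` now denotes `re ⟪x, y⟫_ℂ`, definitionally, which the `obtain rfl` steps use
  let _ : InnerProductSpace ℝ H := InnerProductSpace.rclikeToReal ℂ H
  have hunit : ∀ {A : H →L[ℂ] H}, IsSelfAdjoint A → A * A = 1 → ‖A ψ‖ = 1 := fun hA hA2 =>
    (ContinuousLinearMap.norm_map_of_mem_unitary (hA.mem_unitary_of_mul_self_eq_one hA2) ψ).trans hψ
  have hu₀ := hunit hA₀ hA₀2
  have hu₁ := hunit hA₁ hA₁2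
  have hv₀ := hunit hB₀ hB₀2
  have hv₁ := hunit hB₁ hB₁2
  obtain rfl : c₁ = ⟪A₀ ψ, B₀ ψ⟫ := hc₁.trans (hA₀.re_inner_mul_apply B₀ ψ)
  obtain rfl : c₂ = ⟪A₁ ψ, B₀ ψ⟫ := hc₂.trans (hA₁.re_inner_mul_apply B₀ ψ)
  obtain rfl : c₃ = ⟪A₀ ψ, B₁ ψ⟫ := hc₃.trans (hA₀.re_inner_mul_apply B₁ ψ)
  obtain rfl : c₄ = ⟪A₁ ψ, B₁ ψ⟫ := hc₄.trans (hA₁.re_inner_mul_apply B₁ ψ)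
  have h₁₂ := abs_real_inner_mul_sub_mul_le hu₀ hu₁ hv₀ hv₁
  have h₁₃ := abs_real_inner_mul_sub_mul_le hv₀ hv₁ hu₀ hu₁
  simp only [real_inner_comm (A₀ ψ), real_inner_comm (A₁ ψ)] at h₁₃
  exact ⟨h₁₂, h₁₃, abs_mul_sub_mul_le_swap (real_inner_sq_le_one hu₀ hv₀)
    (real_inner_sq_le_one hu₁ hv₀) (real_inner_sq_le_one hu₀ hv₁)
    (real_inner_sq_le_one hu₁ hv₁) h₁₂⟩

/-- In the quantum Bell-CHSH scenario the two-point correlators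
satisfy the Tsirelson–Landau–Masanes inequalities. -/
theorem quantum_tlm
    {H : Type*} [NormedAddCommGroup H] [InnerProductSpace ℂ H] [CompleteSpace H]
    (ψ : H) (hψ : ‖ψ‖ = 1)
    (A₀ A₁ B₀ B₁ : H →L[ℂ] H)
    (hA₀ : IsSelfAdjoint A₀) (hA₁ : IsSelfAdjoint A₁)
    (hB₀ : IsSelfAdjoint B₀) (hB₁ : IsSelfAdjoint B₁)
    (hA₀2 : A₀ * A₀ = 1) (hA₁2 : A₁ * A₁ = 1)
    (hB₀2 : B₀ * B₀ = 1) (hB₁2 : B₁ * B₁ = 1)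
    (hcomm : ∀ i ∈ [A₀, A₁], ∀ j ∈ [B₀, B₁], i * j = j * i)
    (c₁ c₂ c₃ c₄ : ℝ)
    (hc₁ : c₁ = (inner ℂ ψ ((A₀ * B₀) ψ) : ℂ).re)
    (hc₂ : c₂ = (inner ℂ ψ ((A₁ * B₀) ψ) : ℂ).re)
    (hc₃ : c₃ = (inner ℂ ψ ((A₀ * B₁) ψ) : ℂ).re)
    (hc₄ : c₄ = (inner ℂ ψ ((A₁ * B₁) ψ) : ℂ).re) :
    |c₁ * c₂ - c₃ * c₄| ≤
      Real.sqrt (1 - c₁ ^ 2) * Real.sqrt (1 - c₂ ^ 2) +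
      Real.sqrt (1 - c₃ ^ 2) * Real.sqrt (1 - c₄ ^ 2) ∧
    |c₁ * c₃ - c₂ * c₄| ≤
      Real.sqrt (1 - c₁ ^ 2) * Real.sqrt (1 - c₃ ^ 2) +
      Real.sqrt (1 - c₂ ^ 2) * Real.sqrt (1 - c₄ ^ 2) ∧
    |c₂ * c₃ - c₁ * c₄| ≤
      Real.sqrt (1 - c₂ ^ 2) * Real.sqrt (1 - c₃ ^ 2) +
      Real.sqrt (1 - c₁ ^ 2) * Real.sqrt (1 - c₄ ^ 2) :=
  quantum_tlm_general ψ hψ A₀ A₁ B₀ B₁ hA₀ hA₁ hB₀ hB₁ hA₀2 hA₁2 hB₀2 hB₁2 c₁ c₂ c₃ c₄ hc₁ hc₂ hc₃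
    hc₄
end

section
/- Let M be a 4×4 real symmetric positive semidefinite matrix with all diagonal entries equal to 1, and let V ∈ ℝ⁴ with entries c₁, c₂, c₃, c₄ be such that M − V Vᵀ is positive semidefinite. If M₁₂ = M₃₄ = d, then |c₁ + c₂ + c₃ − c₄| ≤ √(2(1 + d)) + √(2(1 − d)). -/
/-!
Since `M - V Vᵀ` is positive semidefinite, `(V ⬝ᵥ x)² ≤ xᵀ M x` for every `x`. For
`x = e₁ + e₂` and `x = e₃ - e₄` the right-hand side is `2 (1 + d)`, resp. `2 (1 - d)`, and the
CHSH sum is `(c₁ + c₂) + (c₃ - c₄)`.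
-/

namespace Matrix

variable {n : Type*}

theorem PosSemidef.apply_comm_of_sub_vecMulVec {M : Matrix n n ℝ} {v : n → ℝ}
    (h : (M - vecMulVec v v).PosSemidef) (i j : n) : M j i = M i j := by
  have hij := h.isHermitian.apply i j
  simp only [sub_apply, vecMulVec_apply, star_trivial] at hij
  linarith [mul_comm (v i) (v j)]

variable [Fintype n]

theorem dotProduct_vecMulVec_self_mulVec (v x : n → ℝ) :
    x ⬝ᵥ vecMulVec v v *ᵥ x = (v ⬝ᵥ x) ^ 2 := by
  rw [vecMulVec_mulVec, dotProduct_smul, op_smul_eq_mul, dotProduct_comm, sq]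

theorem PosSemidef.sq_dotProduct_le_of_sub_vecMulVec {M : Matrix n n ℝ} {v : n → ℝ}
    (h : (M - vecMulVec v v).PosSemidef) (x : n → ℝ) :
    (v ⬝ᵥ x) ^ 2 ≤ x ⬝ᵥ M *ᵥ x := by
  have hx := h.dotProduct_mulVec_nonneg x
  rw [star_trivial, sub_mulVec, dotProduct_sub, dotProduct_vecMulVec_self_mulVec] at hx
  linarith

variable [DecidableEq n]

theorem single_add_smul_single_dotProduct_mulVec (M : Matrix n n ℝ) (i j : n) (s : ℝ) :
    (Pi.single i 1 + s • Pi.single j 1 : n → ℝ) ⬝ᵥ M *ᵥ (Pi.single i 1 + s • Pi.single j 1) =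
      M i i + s * (M i j + M j i) + s ^ 2 * M j j := by
  simp only [mulVec_add, mulVec_smul, add_dotProduct, dotProduct_add, smul_dotProduct,
    dotProduct_smul, mulVec_single_one, single_one_dotProduct, smul_eq_mul, col_apply]
  ring

theorem PosSemidef.abs_add_mul_le_sqrt_of_sub_vecMulVec {M : Matrix n n ℝ} {v : n → ℝ}
    (h : (M - vecMulVec v v).PosSemidef) {i j : n} (hi : M i i = 1) (hj : M j j = 1)
    {s : ℝ} (hs : s ^ 2 = 1) :
    |v i + s * v j| ≤ √(2 * (1 + s * M i j)) := by
  have hx := h.sq_dotProduct_le_of_sub_vecMulVec (Pi.single i 1 + s • Pi.single j 1)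
  rw [single_add_smul_single_dotProduct_mulVec, h.apply_comm_of_sub_vecMulVec i j, hi, hj, hs,
    dotProduct_add, dotProduct_smul, dotProduct_single_one, dotProduct_single_one,
    smul_eq_mul] at hx
  exact Real.abs_le_sqrt (by linarith)

end Matrix

theorem chsh_tsallis_bound_of_covariance_general
    (M : Matrix (Fin 4) (Fin 4) ℝ)
    (hdiag : ∀ i, M i i = 1)
    (V : Fin 4 → ℝ)
    (hC : (M - Matrix.vecMulVec V V).PosSemidef)
    (d : ℝ) (hd1 : M 0 1 = d) (hd2 : M 2 3 = d) :
    |V 0 + V 1 + V 2 - V 3| ≤ Real.sqrt (2 * (1 + d)) + Real.sqrt (2 * (1 - d)) := by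
  have h01 := hC.abs_add_mul_le_sqrt_of_sub_vecMulVec (hdiag 0) (hdiag 1) (s := 1) (one_pow 2)
  have h23 := hC.abs_add_mul_le_sqrt_of_sub_vecMulVec (hdiag 2) (hdiag 3) (s := -1) (by norm_num)
  rw [hd1, one_mul, one_mul] at h01
  rw [hd2, neg_one_mul, neg_one_mul, ← sub_eq_add_neg, ← sub_eq_add_neg] at h23
  calc |V 0 + V 1 + V 2 - V 3| = |(V 0 + V 1) + (V 2 - V 3)| := by ring_nf
    _ ≤ |V 0 + V 1| + |V 2 - V 3| := abs_add_le _ _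
    _ ≤ √(2 * (1 + d)) + √(2 * (1 - d)) := add_le_add h01 h23

/-- For a 4×4 real symmetric PSD matrix `M` with unit diagonal and a
correlator vector `V` with `M - V Vᵀ` PSD, if `M₁₂ = M₃₄ = d` then the Bell-CHSH
parameter satisfies `|c₁ + c₂ + c₃ - c₄| ≤ √(2(1 + d)) + √(2(1 - d))`. -/
theorem chsh_tsallis_bound_of_covariance
    (M : Matrix (Fin 4) (Fin 4) ℝ) (hM : M.PosSemidef)
    (hdiag : ∀ i, M i i = 1)
    (V : Fin 4 → ℝ)
    (hC : (M - Matrix.vecMulVec V V).PosSemidef)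
    (d : ℝ) (hd1 : M 0 1 = d) (hd2 : M 2 3 = d) :
    |V 0 + V 1 + V 2 - V 3| ≤ Real.sqrt (2 * (1 + d)) + Real.sqrt (2 * (1 - d)) :=
  chsh_tsallis_bound_of_covariance_general M hdiag V hC d hd1 hd2
end

section
/- Let H be a complex Hilbert space, ψ ∈ H a unit vector, and A₀, A₁, B₀, B₁ : H →L[ℂ] H bounded self-adjoint operators satisfying Aᵢ ∘ Aᵢ = 1 and Bⱼ ∘ Bⱼ = 1, with Aᵢ ∘ Bⱼ = Bⱼ ∘ Aᵢ for all i, j ∈ {0,1}. Then the Tsirelson bound holds: |re⟪ψ, (A₀B₀ + A₁B₀ + A₀B₁ − A₁B₁)ψ⟫| ≤ 2√2. -/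
/-!
Write `C = a₀ (b₀ + b₁) + a₁ (b₀ - b₁)`. Since Alice's and Bob's involutions commute,
`C² = 4 + [a₀, a₁] [b₁, b₀]`, and each commutator of two involutions has norm at most `2`,
so `‖C‖² = ‖C²‖ ≤ 8` by the C⋆-identity for the self-adjoint `C`. The expectation value of `C`
in a unit state is bounded by `‖C‖ ≤ 2√2`.
-/

section Ring

variable {R : Type*} [Ring R]

def chsh (a₀ a₁ b₀ b₁ : R) : R := a₀ * b₀ + a₁ * b₀ + a₀ * b₁ - a₁ * b₁

theorem mul_self_add_mul_of_commute {x y u v : R} (hux : Commute u x) (huy : Commute u y)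
    (hvx : Commute v x) (hvy : Commute v y) :
    (x * u + y * v) * (x * u + y * v) =
      x * x * (u * u) + x * y * (u * v) + y * x * (v * u) + y * y * (v * v) := by
  rw [add_mul, mul_add, mul_add, hux.mul_mul_mul_comm, huy.mul_mul_mul_comm,
    hvx.mul_mul_mul_comm, hvy.mul_mul_mul_comm, ← add_assoc]

variable {a₀ a₁ b₀ b₁ : R}

theorem chsh_mul_self (ha₀ : a₀ * a₀ = 1) (ha₁ : a₁ * a₁ = 1) (hb₀ : b₀ * b₀ = 1)
    (hb₁ : b₁ * b₁ = 1) (h₀₀ : Commute a₀ b₀) (h₀₁ : Commute a₀ b₁) (h₁₀ : Commute a₁ b₀)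
    (h₁₁ : Commute a₁ b₁) :
    chsh a₀ a₁ b₀ b₁ * chsh a₀ a₁ b₀ b₁ = 4 + (a₀ * a₁ - a₁ * a₀) * (b₁ * b₀ - b₀ * b₁) := by
  have hchsh : chsh a₀ a₁ b₀ b₁ = a₀ * (b₀ + b₁) + a₁ * (b₀ - b₁) := by unfold chsh; noncomm_ring
  rw [hchsh, mul_self_add_mul_of_commute (h₀₀.add_right h₀₁).symm (h₁₀.add_right h₁₁).symm
    (h₀₀.sub_right h₀₁).symm (h₁₀.sub_right h₁₁).symm, ha₀, ha₁]
  simp only [add_mul, mul_add, sub_mul, mul_sub, hb₀, hb₁]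
  rw [show (4 : R) = 1 + 1 + 1 + 1 by norm_num]
  noncomm_ring

variable [StarRing R]

theorem IsSelfAdjoint.chsh (ha₀ : IsSelfAdjoint a₀) (ha₁ : IsSelfAdjoint a₁)
    (hb₀ : IsSelfAdjoint b₀) (hb₁ : IsSelfAdjoint b₁) (h₀₀ : Commute a₀ b₀) (h₀₁ : Commute a₀ b₁)
    (h₁₀ : Commute a₁ b₀) (h₁₁ : Commute a₁ b₁) :
    IsSelfAdjoint (chsh a₀ a₁ b₀ b₁) := by
  simp only [IsSelfAdjoint, _root_.chsh, star_sub, star_add, star_mul, ha₀.star_eq, ha₁.star_eq,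
    hb₀.star_eq, hb₁.star_eq, h₀₀.eq, h₀₁.eq, h₁₀.eq, h₁₁.eq]

end Ring

theorem norm_mul_sub_mul_le {R : Type*} [NonUnitalSeminormedRing R] (a b : R) :
    ‖a * b - b * a‖ ≤ 2 * (‖a‖ * ‖b‖) :=
  calc ‖a * b - b * a‖ ≤ ‖a * b‖ + ‖b * a‖ := norm_sub_le _ _
    _ ≤ ‖a‖ * ‖b‖ + ‖b‖ * ‖a‖ := add_le_add (norm_mul_le _ _) (norm_mul_le _ _)
    _ = 2 * (‖a‖ * ‖b‖) := by ring

section CStarRing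

variable {A : Type*} [NormedRing A] [StarRing A] [CStarRing A] [Nontrivial A]

theorem IsSelfAdjoint.norm_eq_one_of_mul_self_eq_one {x : A} (hx : IsSelfAdjoint x)
    (hx2 : x * x = 1) : ‖x‖ = 1 :=
  CStarRing.norm_of_mem_unitary <| Unitary.mem_iff.2 <| by rw [hx.star_eq]; exact ⟨hx2, hx2⟩

theorem norm_chsh_le {a₀ a₁ b₀ b₁ : A} (ha₀ : IsSelfAdjoint a₀) (ha₁ : IsSelfAdjoint a₁)
    (hb₀ : IsSelfAdjoint b₀) (hb₁ : IsSelfAdjoint b₁) (ha₀2 : a₀ * a₀ = 1) (ha₁2 : a₁ * a₁ = 1)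
    (hb₀2 : b₀ * b₀ = 1) (hb₁2 : b₁ * b₁ = 1) (h₀₀ : Commute a₀ b₀) (h₀₁ : Commute a₀ b₁)
    (h₁₀ : Commute a₁ b₀) (h₁₁ : Commute a₁ b₁) :
    ‖chsh a₀ a₁ b₀ b₁‖ ≤ 2 * √2 := by
  have ha_comm : ‖a₀ * a₁ - a₁ * a₀‖ ≤ 2 := by
    simpa [ha₀.norm_eq_one_of_mul_self_eq_one ha₀2, ha₁.norm_eq_one_of_mul_self_eq_one ha₁2]
      using norm_mul_sub_mul_le a₀ a₁
  have hb_comm : ‖b₁ * b₀ - b₀ * b₁‖ ≤ 2 := by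
    simpa [hb₀.norm_eq_one_of_mul_self_eq_one hb₀2, hb₁.norm_eq_one_of_mul_self_eq_one hb₁2]
      using norm_mul_sub_mul_le b₁ b₀
  have h4 : ‖(4 : A)‖ ≤ 4 := by simpa using Nat.norm_cast_le (α := A) 4
  have hsq : ‖chsh a₀ a₁ b₀ b₁‖ ^ 2 ≤ 8 :=
    calc ‖chsh a₀ a₁ b₀ b₁‖ ^ 2 = ‖chsh a₀ a₁ b₀ b₁ * chsh a₀ a₁ b₀ b₁‖ :=
          ((ha₀.chsh ha₁ hb₀ hb₁ h₀₀ h₀₁ h₁₀ h₁₁).norm_mul_self).symm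
      _ = ‖4 + (a₀ * a₁ - a₁ * a₀) * (b₁ * b₀ - b₀ * b₁)‖ := by
          rw [chsh_mul_self ha₀2 ha₁2 hb₀2 hb₁2 h₀₀ h₀₁ h₁₀ h₁₁]
      _ ≤ 4 + ‖a₀ * a₁ - a₁ * a₀‖ * ‖b₁ * b₀ - b₀ * b₁‖ :=
          (norm_add_le _ _).trans (add_le_add h4 (norm_mul_le _ _))
      _ ≤ 8 := by nlinarith [norm_nonneg (a₀ * a₁ - a₁ * a₀)]
  calc ‖chsh a₀ a₁ b₀ b₁‖ ≤ √8 := Real.le_sqrt_of_sq_le hsq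
    _ = 2 * √2 := by
        rw [show (8 : ℝ) = 2 ^ 2 * 2 by norm_num, Real.sqrt_mul (by norm_num),
          Real.sqrt_sq (by norm_num)]

end CStarRing

theorem ContinuousLinearMap.abs_re_inner_apply_le {𝕜 E : Type*} [RCLike 𝕜]
    [NormedAddCommGroup E] [InnerProductSpace 𝕜 E] (T : E →L[𝕜] E) (x : E) :
    |RCLike.re (inner 𝕜 x (T x))| ≤ ‖T‖ * ‖x‖ ^ 2 :=
  calc |RCLike.re (inner 𝕜 x (T x))| ≤ ‖inner 𝕜 x (T x)‖ := RCLike.abs_re_le_norm _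
    _ ≤ ‖x‖ * ‖T x‖ := norm_inner_le_norm _ _
    _ ≤ ‖x‖ * (‖T‖ * ‖x‖) := by gcongr; exact T.le_opNorm x
    _ = ‖T‖ * ‖x‖ ^ 2 := by ring

/-- Tsirelson's bound for the quantum Bell-CHSH scenario. -/
theorem tsirelson_bound
    {H : Type*} [NormedAddCommGroup H] [InnerProductSpace ℂ H] [CompleteSpace H]
    (ψ : H) (hψ : ‖ψ‖ = 1)
    (A₀ A₁ B₀ B₁ : H →L[ℂ] H)
    (hA₀ : IsSelfAdjoint A₀) (hA₁ : IsSelfAdjoint A₁)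
    (hB₀ : IsSelfAdjoint B₀) (hB₁ : IsSelfAdjoint B₁)
    (hA₀2 : A₀ * A₀ = 1) (hA₁2 : A₁ * A₁ = 1)
    (hB₀2 : B₀ * B₀ = 1) (hB₁2 : B₁ * B₁ = 1)
    (hcomm : ∀ i ∈ [A₀, A₁], ∀ j ∈ [B₀, B₁], i * j = j * i) :
    |(inner ℂ ψ ((A₀ * B₀ + A₁ * B₀ + A₀ * B₁ - A₁ * B₁) ψ) : ℂ).re| ≤
      2 * Real.sqrt 2 := by
  have : Nontrivial H := nontrivial_of_ne ψ 0 (by rintro rfl; simp at hψ)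
  have hbound := norm_chsh_le hA₀ hA₁ hB₀ hB₁ hA₀2 hA₁2 hB₀2 hB₁2
    (hcomm A₀ (by simp) B₀ (by simp)) (hcomm A₀ (by simp) B₁ (by simp))
    (hcomm A₁ (by simp) B₀ (by simp)) (hcomm A₁ (by simp) B₁ (by simp))
  calc _ ≤ ‖chsh A₀ A₁ B₀ B₁‖ * ‖ψ‖ ^ 2 := (chsh A₀ A₁ B₀ B₁).abs_re_inner_apply_le ψ
    _ ≤ 2 * √2 := by rwa [hψ, one_pow, mul_one]
end

section
/- Let H be a complex Hilbert space, ψ ∈ H a unit vector, and A₀, A₁, B, Y : H →L[ℂ] H bounded self-adjoint operators, each squaring to the identity, such that A₀ and A₁ each commute with B and with Y, and B commutes with Y. Let B' be a further bounded self-adjoint operator squaring to the identity and commuting with A₀, A₁ and Y, and let X₃ = A₀ ∘ B' ∘ Y and X₄ = A₁ ∘ B' ∘ Y. Define c₁ = re⟪ψ, A₀Bψ⟫, c₂ = re⟪ψ, A₁Bψ⟫, c₃ = re⟪ψ, X₃ψ⟫ and c₄ = re⟪ψ, X₄ψ⟫. Then |c₁c₂ − c₃c₄| ≤ √((1 − c₁²)(1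 − c₂²)) + √((1 − c₃²)(1 − c₄²)). -/
lemma sa_inner' {H : Type*} [NormedAddCommGroup H] [InnerProductSpace ℂ H] [CompleteSpace H]
    (X : H →L[ℂ] H) (hX : IsSelfAdjoint X) (x y : H) : (inner ℂ (X x) y : ℂ) = inner ℂ x (X y) := by
  conv_lhs => rw [← hX.adjoint_eq]
  exact ContinuousLinearMap.adjoint_inner_left X y x

lemma conj_id' {M : Type*} [Monoid M] (a c : M) (h : a * c = c * a) (hc : c * c = 1) :
    c * (a * c) = a := by rw [h, ← mul_assoc, hc, one_mul]

lemma sa_mul' {H : Type*} [NormedAddCommGroup H] [InnerProductSpace ℂ H] [CompleteSpace H]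
    (P Q : H →L[ℂ] H) (hP : IsSelfAdjoint P) (hQ : IsSelfAdjoint Q) (h : P * Q = Q * P) :
    IsSelfAdjoint (P * Q) := by
  show star _ = _
  rw [star_mul, hP.star_eq, hQ.star_eq, h]

lemma norm_inv_apply' {H : Type*} [NormedAddCommGroup H] [InnerProductSpace ℂ H] [CompleteSpace H]
    (X : H →L[ℂ] H) (hX : IsSelfAdjoint X) (hXX : X * X = 1) (ψ : H) (hψ : ‖ψ‖ = 1) :
    ‖X ψ‖ = 1 := by
  have h : (inner ℂ (X ψ) (X ψ) : ℂ) = inner ℂ ψ ψ := by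
    rw [sa_inner' X hX]
    congr 1
    have := congrArg (fun T : H →L[ℂ] H => T ψ) hXX
    simpa [ContinuousLinearMap.mul_apply] using this
  rw [@norm_eq_sqrt_re_inner ℂ, h, ← @norm_eq_sqrt_re_inner ℂ, hψ]

lemma real_corr' {H : Type*} [NormedAddCommGroup H] [InnerProductSpace ℂ H] [CompleteSpace H]
    (X : H →L[ℂ] H) (hX : IsSelfAdjoint X) (ψ : H) :
    (inner ℂ ψ (X ψ) : ℂ) = (((inner ℂ ψ (X ψ) : ℂ)).re : ℂ) := by
  have h : (starRingEnd ℂ) (inner ℂ ψ (X ψ)) = inner ℂ ψ (X ψ) := by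
    rw [inner_conj_symm, sa_inner' X hX]
  exact (Complex.conj_eq_iff_re.mp h).symm

lemma aux_cs {H : Type*} [NormedAddCommGroup H] [InnerProductSpace ℂ H]
    (ψ u v : H) (hψ : ‖ψ‖ = 1) (hu : ‖u‖ = 1) (hv : ‖v‖ = 1)
    (c d : ℝ) (hc : (inner ℂ ψ u : ℂ) = (c : ℂ)) (hd : (inner ℂ ψ v : ℂ) = (d : ℂ)) :
    |(inner ℂ u v : ℂ).re - c * d| ≤ Real.sqrt (1 - c ^ 2) * Real.sqrt (1 - d ^ 2) := by
  set u' := u - (c : ℂ) • ψ with hu'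
  set v' := v - (d : ℂ) • ψ with hv'
  have hcu : (inner ℂ u ψ : ℂ) = (c : ℂ) := by
    rw [← inner_conj_symm, hc]; simp
  have hdv : (inner ℂ v ψ : ℂ) = (d : ℂ) := by
    rw [← inner_conj_symm, hd]; simp
  have hψψ : (inner ℂ ψ ψ : ℂ) = 1 := by
    rw [inner_self_eq_norm_sq_to_K, hψ]; norm_num
  have huv : (inner ℂ u' v' : ℂ) = inner ℂ u v - (c : ℂ) * d := by
    simp only [hu', hv', inner_sub_left, inner_sub_right, inner_smul_left, inner_smul_right,
      hc, hd, hcu, hdv, hψψ, Complex.conj_ofReal]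
    ring
  have hnu : ‖u'‖ = Real.sqrt (1 - c ^ 2) := by
    have : (inner ℂ u' u' : ℂ) = ((1 - c ^ 2 : ℝ) : ℂ) := by
      have huu : (inner ℂ u u : ℂ) = 1 := by
        rw [inner_self_eq_norm_sq_to_K, hu]; norm_num
      simp only [hu', inner_sub_left, inner_sub_right, inner_smul_left, inner_smul_right,
        hc, hcu, hψψ, huu, Complex.conj_ofReal]
      push_cast; ring
    rw [@norm_eq_sqrt_re_inner ℂ, this]; simp [← Complex.ofReal_pow]
  have hnv : ‖v'‖ = Real.sqrt (1 - d ^ 2) := by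
    have : (inner ℂ v' v' : ℂ) = ((1 - d ^ 2 : ℝ) : ℂ) := by
      have hvv : (inner ℂ v v : ℂ) = 1 := by
        rw [inner_self_eq_norm_sq_to_K, hv]; norm_num
      simp only [hv', inner_sub_left, inner_sub_right, inner_smul_left, inner_smul_right,
        hd, hdv, hψψ, hvv, Complex.conj_ofReal]
      push_cast; ring
    rw [@norm_eq_sqrt_re_inner ℂ, this]; simp [← Complex.ofReal_pow]
  calc |(inner ℂ u v : ℂ).re - c * d| = |((inner ℂ u' v' : ℂ)).re| := by
        rw [huv]; simp [Complex.sub_re]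
    _ ≤ ‖(inner ℂ u' v' : ℂ)‖ := Complex.abs_re_le_norm _
    _ ≤ ‖u'‖ * ‖v'‖ := norm_inner_le_norm u' v'
    _ = Real.sqrt (1 - c ^ 2) * Real.sqrt (1 - d ^ 2) := by rw [hnu, hnv]

/-- In the tripartite quantum scenario with Alice's observables
`A₀, A₁`, Bob's observables `B, B'`, and Charlie's observable `Y` (all self-adjoint
involutions, with operators of different parties commuting), the mixed two- and
three-point correlators `c₁ = ⟨A₀B⟩`, `c₂ = ⟨A₁B⟩`, `c₃ = ⟨A₀B'Y⟩`, `c₄ = ⟨A₁B'Y⟩`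
satisfy the Tsirelson–Landau–Masanes-type inequality. -/
theorem tripartite_tlm
    {H : Type*} [NormedAddCommGroup H] [InnerProductSpace ℂ H] [CompleteSpace H]
    (ψ : H) (hψ : ‖ψ‖ = 1)
    (A₀ A₁ B B' Y : H →L[ℂ] H)
    (hsa : ∀ X ∈ [A₀, A₁, B, B', Y], IsSelfAdjoint X)
    (hsq : ∀ X ∈ [A₀, A₁, B, B', Y], X * X = 1)
    (hAB : ∀ i ∈ [A₀, A₁], ∀ j ∈ [B, B'], i * j = j * i)
    (hAY : ∀ i ∈ [A₀, A₁], i * Y = Y * i)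
    (hBY : B * Y = Y * B) (hB'Y : B' * Y = Y * B')
    (c₁ c₂ c₃ c₄ : ℝ)
    (hc₁ : c₁ = (inner ℂ ψ ((A₀ * B) ψ) : ℂ).re)
    (hc₂ : c₂ = (inner ℂ ψ ((A₁ * B) ψ) : ℂ).re)
    (hc₃ : c₃ = (inner ℂ ψ ((A₀ * B' * Y) ψ) : ℂ).re)
    (hc₄ : c₄ = (inner ℂ ψ ((A₁ * B' * Y) ψ) : ℂ).re) :
    |c₁ * c₂ - c₃ * c₄| ≤
      Real.sqrt ((1 - c₁ ^ 2) * (1 - c₂ ^ 2)) +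
      Real.sqrt ((1 - c₃ ^ 2) * (1 - c₄ ^ 2)) := by
  have hsaA₀ := hsa A₀ (by simp)
  have hsaA₁ := hsa A₁ (by simp)
  have hsaB := hsa B (by simp)
  have hsaB' := hsa B' (by simp)
  have hsaY := hsa Y (by simp)
  have hsqA₀ := hsq A₀ (by simp)
  have hsqA₁ := hsq A₁ (by simp)
  have hsqB := hsq B (by simp)
  have hsqB' := hsq B' (by simp)
  have hsqY := hsq Y (by simp)
  have hA₀B := hAB A₀ (by simp) B (by simp)
  have hA₁B := hAB A₁ (by simp) B (by simp)
  have hA₀B' := hAB A₀ (by simp) B' (by simp)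
  have hA₁B' := hAB A₁ (by simp) B' (by simp)
  have hA₀Y := hAY A₀ (by simp)
  have hA₁Y := hAY A₁ (by simp)
  -- facts about C = B' * Y
  have hsaC : IsSelfAdjoint (B' * Y) := sa_mul' B' Y hsaB' hsaY hB'Y
  have hsqC : (B' * Y) * (B' * Y) = 1 := by
    rw [mul_assoc, conj_id' B' Y hB'Y hsqY, hsqB']
  have hA₀C : A₀ * (B' * Y) = (B' * Y) * A₀ := by
    rw [← mul_assoc, hA₀B', mul_assoc, hA₀Y, ← mul_assoc]
  have hA₁C : A₁ * (B' * Y) = (B' * Y) * A₁ := by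
    rw [← mul_assoc, hA₁B', mul_assoc, hA₁Y, ← mul_assoc]
  have hX₃e : A₀ * B' * Y = A₀ * (B' * Y) := mul_assoc _ _ _
  have hX₄e : A₁ * B' * Y = A₁ * (B' * Y) := mul_assoc _ _ _
  have hsaX₁ : IsSelfAdjoint (A₀ * B) := sa_mul' A₀ B hsaA₀ hsaB hA₀B
  have hsaX₂ : IsSelfAdjoint (A₁ * B) := sa_mul' A₁ B hsaA₁ hsaB hA₁B
  have hsaX₃ : IsSelfAdjoint (A₀ * (B' * Y)) := sa_mul' A₀ (B' * Y) hsaA₀ hsaC hA₀C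
  have hsaX₄ : IsSelfAdjoint (A₁ * (B' * Y)) := sa_mul' A₁ (B' * Y) hsaA₁ hsaC hA₁C
  have hsqX₁ : (A₀ * B) * (A₀ * B) = 1 := by
    rw [mul_assoc, conj_id' A₀ B hA₀B hsqB, hsqA₀]
  have hsqX₂ : (A₁ * B) * (A₁ * B) = 1 := by
    rw [mul_assoc, conj_id' A₁ B hA₁B hsqB, hsqA₁]
  have hsqX₃ : (A₀ * (B' * Y)) * (A₀ * (B' * Y)) = 1 := by
    rw [mul_assoc, conj_id' A₀ (B' * Y) hA₀C hsqC, hsqA₀]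
  have hsqX₄ : (A₁ * (B' * Y)) * (A₁ * (B' * Y)) = 1 := by
    rw [mul_assoc, conj_id' A₁ (B' * Y) hA₁C hsqC, hsqA₁]
  -- products coincide
  have h12 : (A₀ * B) * (A₁ * B) = A₀ * A₁ := by
    rw [mul_assoc, conj_id' A₁ B hA₁B hsqB]
  have h34 : (A₀ * (B' * Y)) * (A₁ * (B' * Y)) = A₀ * A₁ := by
    rw [mul_assoc, conj_id' A₁ (B' * Y) hA₁C hsqC]
  -- norms
  have n₁ : ‖(A₀ * B) ψ‖ = 1 := norm_inv_apply' _ hsaX₁ hsqX₁ ψ hψ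
  have n₂ : ‖(A₁ * B) ψ‖ = 1 := norm_inv_apply' _ hsaX₂ hsqX₂ ψ hψ
  have n₃ : ‖(A₀ * (B' * Y)) ψ‖ = 1 := norm_inv_apply' _ hsaX₃ hsqX₃ ψ hψ
  have n₄ : ‖(A₁ * (B' * Y)) ψ‖ = 1 := norm_inv_apply' _ hsaX₄ hsqX₄ ψ hψ
  -- correlators as inner ℂ products
  have hc₁' : (inner ℂ ψ ((A₀ * B) ψ) : ℂ) = (c₁ : ℂ) := by
    rw [real_corr' _ hsaX₁ ψ, hc₁]
  have hc₂' : (inner ℂ ψ ((A₁ * B) ψ) : ℂ) = (c₂ : ℂ) := by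
    rw [real_corr' _ hsaX₂ ψ, hc₂]
  have hc₃' : (inner ℂ ψ ((A₀ * (B' * Y)) ψ) : ℂ) = (c₃ : ℂ) := by
    rw [real_corr' _ hsaX₃ ψ, hc₃, hX₃e]
  have hc₄' : (inner ℂ ψ ((A₁ * (B' * Y)) ψ) : ℂ) = (c₄ : ℂ) := by
    rw [real_corr' _ hsaX₄ ψ, hc₄, hX₄e]
  -- cross inner ℂ products coincide
  have hcross : (inner ℂ ((A₀ * B) ψ) ((A₁ * B) ψ) : ℂ)
      = inner ℂ ((A₀ * (B' * Y)) ψ) ((A₁ * (B' * Y)) ψ) := by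
    rw [sa_inner' _ hsaX₁, sa_inner' _ hsaX₃]
    have e1 : (A₀ * B) ((A₁ * B) ψ) = ((A₀ * B) * (A₁ * B)) ψ := rfl
    have e2 : (A₀ * (B' * Y)) ((A₁ * (B' * Y)) ψ)
        = ((A₀ * (B' * Y)) * (A₁ * (B' * Y))) ψ := rfl
    rw [e1, e2, h12, h34]
  have key1 := aux_cs ψ ((A₀ * B) ψ) ((A₁ * B) ψ) hψ n₁ n₂ c₁ c₂ hc₁' hc₂'
  have key2 := aux_cs ψ ((A₀ * (B' * Y)) ψ) ((A₁ * (B' * Y)) ψ) hψ n₃ n₄ c₃ c₄ hc₃' hc₄'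
  rw [← hcross] at key2
  have hb₁ : |c₁| ≤ 1 := by
    have h := norm_inner_le_norm (𝕜 := ℂ) ψ ((A₀ * B) ψ)
    rw [hc₁', hψ, n₁, Complex.norm_real] at h
    simpa using h
  have hb₃ : |c₃| ≤ 1 := by
    have h := norm_inner_le_norm (𝕜 := ℂ) ψ ((A₀ * (B' * Y)) ψ)
    rw [hc₃', hψ, n₃, Complex.norm_real] at h
    simpa using h
  have h1nn : 0 ≤ 1 - c₁ ^ 2 := by nlinarith [sq_abs c₁, abs_nonneg c₁]
  have h3nn : 0 ≤ 1 - c₃ ^ 2 := by nlinarith [sq_abs c₃, abs_nonneg c₃]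
  rw [Real.sqrt_mul h1nn, Real.sqrt_mul h3nn]
  calc |c₁ * c₂ - c₃ * c₄|
      ≤ |c₁ * c₂ - (inner ℂ ((A₀ * B) ψ) ((A₁ * B) ψ) : ℂ).re|
        + |(inner ℂ ((A₀ * B) ψ) ((A₁ * B) ψ) : ℂ).re - c₃ * c₄| := abs_sub_le _ _ _
    _ = |(inner ℂ ((A₀ * B) ψ) ((A₁ * B) ψ) : ℂ).re - c₁ * c₂|
        + |(inner ℂ ((A₀ * B) ψ) ((A₁ * B) ψ) : ℂ).re - c₃ * c₄| := by rw [abs_sub_comm]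
    _ ≤ Real.sqrt (1 - c₁ ^ 2) * Real.sqrt (1 - c₂ ^ 2)
        + Real.sqrt (1 - c₃ ^ 2) * Real.sqrt (1 - c₄ ^ 2) := add_le_add key1 key2
end

section
/- Let H be a complex Hilbert space, ψ ∈ H a unit vector, and A₀, A₁, A₂, B₀, B₁, B₂ : H →L[ℂ] H bounded self-adjoint operators, each squaring to the identity, with every Aᵢ commuting with every Bⱼ. Let d = re⟪ψ, (A₀A₁ + A₁A₀)ψ⟫/2, e = re⟪ψ, (A₀A₂ + A₂A₀)ψ⟫/2, f = re⟪ψ, (A₁A₂ + A₂A₁)ψ⟫/2, and let B' = re⟪ψ, (A₀B₀ + A₁B₀ − A₂B₀ + A₀B₁ + A₁B₁ + A₂B₁ − A₀B₂ + A₁B₂)ψ⟫. Then |B'| ≤ √(3 + 2d − 2(e + f)) + √(3 + 2d + 2(e + f)) + √(2 − 2d). -/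
/-!
The Bell operator is `S₀ B₀ + S₁ B₁ + S₂ B₂` with `S₀ = A₀ + A₁ - A₂`, `S₁ = A₀ + A₁ + A₂` and
`S₂ = A₁ - A₀`. As `Sᵢ` is self-adjoint, `⟪ψ, Sᵢ Bᵢ ψ⟫ = ⟪Sᵢ ψ, Bᵢ ψ⟫`, and `Bᵢ ψ` is a unit vector
(a self-adjoint involution is unitary), so Cauchy–Schwarz bounds the i-th term by `‖Sᵢ ψ‖`.
The vectors `uᵢ = Aᵢ ψ` are unit vectors with `d = re ⟪u₀, u₁⟫`, `e = re ⟪u₀, u₂⟫`,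
`f = re ⟪u₁, u₂⟫`, and expanding `‖Sᵢ ψ‖²` in them gives the three radicands.
-/

open RCLike

section InnerProductSpace

variable {𝕜 E : Type*} [RCLike 𝕜] [NormedAddCommGroup E] [InnerProductSpace 𝕜 E]

local notation "⟪" x ", " y "⟫" => inner 𝕜 x y

theorem norm_add_add_sq (u v w : E) :
    ‖u + v + w‖ ^ 2 = ‖u‖ ^ 2 + ‖v‖ ^ 2 + ‖w‖ ^ 2
      + 2 * (re ⟪u, v⟫ + re ⟪u, w⟫ + re ⟪v, w⟫) := by
  rw [norm_add_sq (𝕜 := 𝕜), norm_add_sq (𝕜 := 𝕜), inner_add_left, map_add]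
  ring

theorem abs_re_inner_le_norm_of_norm_eq_one (x : E) {y : E} (hy : ‖y‖ = 1) :
    |re ⟪x, y⟫| ≤ ‖x‖ :=
  calc |re ⟪x, y⟫| ≤ ‖⟪x, y⟫‖ := abs_re_le_norm _
    _ ≤ ‖x‖ * ‖y‖ := norm_inner_le_norm x y
    _ = ‖x‖ := by rw [hy, mul_one]

theorem i3322_vector_bound {u₀ u₁ u₂ : E} (hu₀ : ‖u₀‖ = 1) (hu₁ : ‖u₁‖ = 1) (hu₂ : ‖u₂‖ = 1)
    {b₀ b₁ b₂ : E} (hb₀ : ‖b₀‖ = 1) (hb₁ : ‖b₁‖ = 1) (hb₂ : ‖b₂‖ = 1) :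
    |re ⟪u₀ + u₁ - u₂, b₀⟫ + re ⟪u₀ + u₁ + u₂, b₁⟫ + re ⟪u₁ - u₀, b₂⟫| ≤
      √(3 + 2 * re ⟪u₀, u₁⟫ - 2 * (re ⟪u₀, u₂⟫ + re ⟪u₁, u₂⟫)) +
        √(3 + 2 * re ⟪u₀, u₁⟫ + 2 * (re ⟪u₀, u₂⟫ + re ⟪u₁, u₂⟫)) + √(2 - 2 * re ⟪u₀, u₁⟫) := by
  have norm_eq_sqrt {x : E} {c : ℝ} (h : ‖x‖ ^ 2 = c) : ‖x‖ = √c := by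
    rw [← h, Real.sqrt_sq (norm_nonneg x)]
  have h₀ : ‖u₀ + u₁ - u₂‖ = √(3 + 2 * re ⟪u₀, u₁⟫ - 2 * (re ⟪u₀, u₂⟫ + re ⟪u₁, u₂⟫)) := by
    refine norm_eq_sqrt ?_
    rw [sub_eq_add_neg, norm_add_add_sq (𝕜 := 𝕜), inner_neg_right, inner_neg_right, norm_neg]
    simp only [map_neg, hu₀, hu₁, hu₂]
    ring
  have h₁ : ‖u₀ + u₁ + u₂‖ = √(3 + 2 * re ⟪u₀, u₁⟫ + 2 * (re ⟪u₀, u₂⟫ + re ⟪u₁, u₂⟫)) := by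
    refine norm_eq_sqrt ?_
    rw [norm_add_add_sq (𝕜 := 𝕜), hu₀, hu₁, hu₂]
    ring
  have h₂ : ‖u₁ - u₀‖ = √(2 - 2 * re ⟪u₀, u₁⟫) := by
    refine norm_eq_sqrt ?_
    rw [norm_sub_sq (𝕜 := 𝕜), inner_re_symm, hu₀, hu₁]
    ring
  rw [← h₀, ← h₁, ← h₂]
  calc _ ≤ |re ⟪u₀ + u₁ - u₂, b₀⟫| + |re ⟪u₀ + u₁ + u₂, b₁⟫| + |re ⟪u₁ - u₀, b₂⟫| :=
        abs_add_three _ _ _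
    _ ≤ _ := by
      gcongr <;> exact abs_re_inner_le_norm_of_norm_eq_one _ ‹_›

end InnerProductSpace

namespace IsSelfAdjoint

variable {𝕜 E : Type*} [RCLike 𝕜] [NormedAddCommGroup E] [InnerProductSpace 𝕜 E] [CompleteSpace E]
  {A : E →L[𝕜] E}

local notation "⟪" x ", " y "⟫" => inner 𝕜 x y

theorem inner_mul_apply (hA : IsSelfAdjoint A) (B : E →L[𝕜] E) (x y : E) :
    ⟪x, (A * B) y⟫ = ⟪A x, B y⟫ :=
  (hA.isSymmetric x (B y)).symm

theorem norm_apply_of_mul_self_eq_one (hA : IsSelfAdjoint A) (hAA : A * A = 1) (x : E) :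
    ‖A x‖ = ‖x‖ :=
  A.norm_map_of_mem_unitary (Unitary.mem_iff.mpr (by rw [hA.star_eq]; exact ⟨hAA, hAA⟩)) x

theorem re_inner_anticommutator (hA : IsSelfAdjoint A) {B : E →L[𝕜] E} (hB : IsSelfAdjoint B)
    (x : E) : re ⟪x, (A * B + B * A) x⟫ / 2 = re ⟪A x, B x⟫ := by
  rw [add_apply, inner_add_right, map_add, hA.inner_mul_apply,
    hB.inner_mul_apply, inner_re_symm (B x)]
  ring

end IsSelfAdjoint

theorem i3322_quantum_bound_general
    {H : Type*} [NormedAddCommGroup H] [InnerProductSpace ℂ H] [CompleteSpace H]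
    (ψ : H) (hψ : ‖ψ‖ = 1)
    (A₀ A₁ A₂ B₀ B₁ B₂ : H →L[ℂ] H)
    (hsa : ∀ X ∈ [A₀, A₁, A₂, B₀, B₁, B₂], IsSelfAdjoint X)
    (hsq : ∀ X ∈ [A₀, A₁, A₂, B₀, B₁, B₂], X * X = 1)
    (d e f : ℝ)
    (hd : d = (inner ℂ ψ ((A₀ * A₁ + A₁ * A₀) ψ) : ℂ).re / 2)
    (he : e = (inner ℂ ψ ((A₀ * A₂ + A₂ * A₀) ψ) : ℂ).re / 2)
    (hf : f = (inner ℂ ψ ((A₁ * A₂ + A₂ * A₁) ψ) : ℂ).re / 2) :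
    |(inner ℂ ψ ((A₀ * B₀ + A₁ * B₀ - A₂ * B₀ + A₀ * B₁ + A₁ * B₁ + A₂ * B₁
        - A₀ * B₂ + A₁ * B₂) ψ) : ℂ).re| ≤
      Real.sqrt (3 + 2 * d - 2 * (e + f)) + Real.sqrt (3 + 2 * d + 2 * (e + f)) +
        Real.sqrt (2 - 2 * d) := by
  simp only [List.mem_cons, List.not_mem_nil, or_false, forall_eq_or_imp, forall_eq] at hsa hsq
  obtain ⟨hA₀, hA₁, hA₂, hB₀, hB₁, hB₂⟩ := hsa
  obtain ⟨qA₀, qA₁, qA₂, qB₀, qB₁, qB₂⟩ := hsq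
  have unit {X : H →L[ℂ] H} (hX : IsSelfAdjoint X) (qX : X * X = 1) : ‖X ψ‖ = 1 :=
    (hX.norm_apply_of_mul_self_eq_one qX ψ).trans hψ
  simp only [← RCLike.re_to_complex] at hd he hf ⊢
  rw [hd, he, hf, hA₀.re_inner_anticommutator hA₁, hA₀.re_inner_anticommutator hA₂,
    hA₁.re_inner_anticommutator hA₂]
  convert i3322_vector_bound (unit hA₀ qA₀) (unit hA₁ qA₁) (unit hA₂ qA₂)
    (unit hB₀ qB₀) (unit hB₁ qB₁) (unit hB₂ qB₂) using 2
  simp only [add_apply, sub_apply, inner_add_right, inner_sub_right, hA₀.inner_mul_apply,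
    hA₁.inner_mul_apply, hA₂.inner_mul_apply, inner_add_left, inner_sub_left, map_add, map_sub]
  ring

/-- In the quantum I₃₃₂₂-type scenario with three ±1-valued
observables per party, the symmetrized I₃₃₂₂ Bell expression `B'` satisfies
`|B'| ≤ √(3 + 2d - 2(e + f)) + √(3 + 2d + 2(e + f)) + √(2 - 2d)`, where
`d = ⟨{A₀,A₁}⟩/2`, `e = ⟨{A₀,A₂}⟩/2`, `f = ⟨{A₁,A₂}⟩/2`. -/
theorem i3322_quantum_bound
    {H : Type*} [NormedAddCommGroup H] [InnerProductSpace ℂ H] [CompleteSpace H]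
    (ψ : H) (hψ : ‖ψ‖ = 1)
    (A₀ A₁ A₂ B₀ B₁ B₂ : H →L[ℂ] H)
    (hsa : ∀ X ∈ [A₀, A₁, A₂, B₀, B₁, B₂], IsSelfAdjoint X)
    (hsq : ∀ X ∈ [A₀, A₁, A₂, B₀, B₁, B₂], X * X = 1)
    (hAB : ∀ i ∈ [A₀, A₁, A₂], ∀ j ∈ [B₀, B₁, B₂], i * j = j * i)
    (d e f : ℝ)
    (hd : d = (inner ℂ ψ ((A₀ * A₁ + A₁ * A₀) ψ) : ℂ).re / 2)
    (he : e = (inner ℂ ψ ((A₀ * A₂ + A₂ * A₀) ψ) : ℂ).re / 2)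
    (hf : f = (inner ℂ ψ ((A₁ * A₂ + A₂ * A₁) ψ) : ℂ).re / 2) :
    |(inner ℂ ψ ((A₀ * B₀ + A₁ * B₀ - A₂ * B₀ + A₀ * B₁ + A₁ * B₁ + A₂ * B₁
        - A₀ * B₂ + A₁ * B₂) ψ) : ℂ).re| ≤
      Real.sqrt (3 + 2 * d - 2 * (e + f)) + Real.sqrt (3 + 2 * d + 2 * (e + f)) +
        Real.sqrt (2 - 2 * d) :=
  i3322_quantum_bound_general ψ hψ A₀ A₁ A₂ B₀ B₁ B₂ hsa hsq d e f hd he hf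
end

section
/- For all real numbers d and s such that −1 ≤ d ≤ 1, 3 + 2d − 2s ≥ 0, and 3 + 2d + 2s ≥ 0, one has √(3 + 2d − 2s) + √(3 + 2d + 2s) + √(2 − 2d) ≤ 5, with equality when s = 0 and d = 1/2. -/
/-! Each square root is bounded by its tangent line at the point where equality is attained,
`2 t √x ≤ t² + x`, taken at `x = 4, 4, 1`. The weights `1/4, 1/4, 1/2` of these tangent lines
make the `d`- and `s`-terms cancel, leaving exactly `5`. -/

lemma two_mul_mul_sqrt_le_sq_add (t : ℝ) {x : ℝ} (hx : 0 ≤ x) : 2 * t * √x ≤ t ^ 2 + x := by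
  simpa only [Real.sq_sqrt hx] using two_mul_le_add_sq t √x

theorem i3322_bound_general (d s : ℝ) (hd' : d ≤ 1)
    (h₁ : 0 ≤ 3 + 2 * d - 2 * s) (h₂ : 0 ≤ 3 + 2 * d + 2 * s) :
    Real.sqrt (3 + 2 * d - 2 * s) + Real.sqrt (3 + 2 * d + 2 * s) +
      Real.sqrt (2 - 2 * d) ≤ 5 ∧
    (s = 0 ∧ d = 1 / 2 →
      Real.sqrt (3 + 2 * d - 2 * s) + Real.sqrt (3 + 2 * d + 2 * s) +
        Real.sqrt (2 - 2 * d) = 5) := by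
  refine ⟨?_, ?_⟩
  · have ha := two_mul_mul_sqrt_le_sq_add 2 h₁
    have hb := two_mul_mul_sqrt_le_sq_add 2 h₂
    have hc := two_mul_mul_sqrt_le_sq_add 1 (by linarith : 0 ≤ 2 - 2 * d)
    linarith
  · rintro ⟨rfl, rfl⟩
    norm_num

/-- For real `d ∈ [-1,1]` and `s` with `3 + 2d - 2s ≥ 0` and
`3 + 2d + 2s ≥ 0`, one has `√(3+2d-2s) + √(3+2d+2s) + √(2-2d) ≤ 5`, with equality
when `s = 0` and `d = 1/2`. -/
theorem i3322_bound (d s : ℝ) (hd : -1 ≤ d) (hd' : d ≤ 1)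
    (h₁ : 0 ≤ 3 + 2 * d - 2 * s) (h₂ : 0 ≤ 3 + 2 * d + 2 * s) :
    Real.sqrt (3 + 2 * d - 2 * s) + Real.sqrt (3 + 2 * d + 2 * s) +
      Real.sqrt (2 - 2 * d) ≤ 5 ∧
    (s = 0 ∧ d = 1 / 2 →
      Real.sqrt (3 + 2 * d - 2 * s) + Real.sqrt (3 + 2 * d + 2 * s) +
        Real.sqrt (2 - 2 * d) = 5) :=
  i3322_bound_general d s hd' h₁ h₂
end
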